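/- For a normal coarse space (X, E) and ultrafilters p, q ∈ B♯, the following are equivalent: (1) p ∼ q (p and q are identified in the Higson corona, i.e., h^β(p) = h^β(q) for every slowly oscillating function h : X → [0,1]); (2) P λ Q for each P ∈ p and Q ∈ q; (3) (p, q) lies in the closure of the parallelity relation ∥ in B♯ × B♯. -/

import Mathlib

open Set

/-- A coarse structure (ballean) on a set `X`. -/
structure CoarseStruct (X : Type*) where
  sets : Set (Set (X × X))
  diagonal_mem : Set.diagonal X ∈ sets
  diagonal_subset : ∀ E ∈ sets, Set.diagonal X ⊆ E
  comp_mem : ∀ E ∈ sets, ∀ F ∈ sets,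
    {p : X × X | ∃ z, (p.1, z) ∈ E ∧ (z, p.2) ∈ F} ∈ sets
  inv_mem : ∀ E ∈ sets, {p : X × X | (p.2, p.1) ∈ E} ∈ sets
  subset_mem : ∀ E ∈ sets, ∀ E' : Set (X × X),
    Set.diagonal X ⊆ E' → E' ⊆ E → E' ∈ sets
  cover : ∀ p : X × X, ∃ E ∈ sets, p ∈ E

namespace CoarseStruct

variable {X : Type*}

/-- The ball `E[A]` of radius `E` around `A`. -/
def ball (E : Set (X × X)) (A : Set X) : Set X := {y | ∃ a ∈ A, (a, y) ∈ E}

/-- A set is bounded if it is contained in a ball around a point. -/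
def IsBounded (C : CoarseStruct X) (B : Set X) : Prop :=
  ∃ E ∈ C.sets, ∃ x : X, B ⊆ ball E {x}

/-- Closeness: `A δ B`. -/
def Close (C : CoarseStruct X) (A B : Set X) : Prop :=
  ∃ E ∈ C.sets, A ⊆ ball E B ∧ B ⊆ ball E A

/-- Linkness: `A λ B`. -/
def Linked (C : CoarseStruct X) (A B : Set X) : Prop :=
  (C.IsBounded A ∧ C.IsBounded B) ∨
  ∃ A' B' : Set X, A' ⊆ A ∧ B' ⊆ B ∧ ¬C.IsBounded A' ∧ ¬C.IsBounded B' ∧ C.Close A' B'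

def LambdaEquiv (C C' : CoarseStruct X) : Prop :=
  ∀ A B : Set X, C.Linked A B ↔ C'.Linked A B

def DeltaEquiv (C C' : CoarseStruct X) : Prop :=
  ∀ A B : Set X, C.Close A B ↔ C'.Close A B

def Discrete (C : CoarseStruct X) : Prop :=
  ∀ E ∈ C.sets, ∃ B : Set X, C.IsBounded B ∧ ∀ x ∉ B, ball E {x} = {x}

def Large (C : CoarseStruct X) (Y : Set X) : Prop :=
  ∃ E ∈ C.sets, ball E Y = Set.univ

/-- The subballean on `Y` is discrete. -/
def DiscreteOn (C : CoarseStruct X) (Y : Set X) : Prop :=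
  ∀ E ∈ C.sets, ∃ B : Set X, C.IsBounded B ∧ ∀ y ∈ Y \ B, ball E {y} ∩ Y = {y}

def CoarselyDiscrete (C : CoarseStruct X) : Prop :=
  ∃ Y : Set X, C.Large Y ∧ C.DiscreteOn Y

def LambdaRigid (C : CoarseStruct X) : Prop :=
  ∀ C' : CoarseStruct X, LambdaEquiv C C' → C' = C

def DeltaRigid (C : CoarseStruct X) : Prop :=
  ∀ C' : CoarseStruct X, DeltaEquiv C C' → C' = C

def IsBase (C : CoarseStruct X) (B : Set (Set (X × X))) : Prop :=
  B ⊆ C.sets ∧ ∀ E ∈ C.sets, ∃ E' ∈ B, E ⊆ E'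

/-- Metrizable: the coarse structure has a countable base. -/
def Metrizable (C : CoarseStruct X) : Prop :=
  ∃ B : Set (Set (X × X)), B.Countable ∧ C.IsBase B

/-- Ordinal: the coarse structure has a base linearly ordered by inclusion. -/
def Ordinal (C : CoarseStruct X) : Prop :=
  ∃ B : Set (Set (X × X)), C.IsBase B ∧ IsChain (· ⊆ ·) B

def MacroUniform (C : CoarseStruct X) (f : X → ℝ) : Prop :=
  ∀ E ∈ C.sets, ∃ r : ℝ, 0 < r ∧
    ∀ x : X, ∀ y ∈ ball E {x}, ∀ z ∈ ball E {x}, |f y - f z| ≤ r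

def Submetrizable (C : CoarseStruct X) : Prop :=
  ¬C.IsBounded Set.univ ∧ ∃ C'' : CoarseStruct X,
    C.sets ⊆ C''.sets ∧ ¬C''.IsBounded Set.univ ∧ C''.Metrizable

def SlowlyOscillating (C : CoarseStruct X) (f : X → ℝ) : Prop :=
  ∀ E ∈ C.sets, ∀ ε : ℝ, 0 < ε → ∃ B : Set X, C.IsBounded B ∧
    ∀ x ∉ B, ∀ y ∈ ball E {x}, ∀ z ∈ ball E {x}, |f y - f z| < ε

/-- The entourage `H_{(E,Φ)}`: `H[x] = {x}` for `x ∈ Φ` and `H[x] = E[x] \ Φ` for `x ∉ Φ`. -/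
def EPhiBase (E : Set (X × X)) (Φ : Set X) : Set (X × X) :=
  {p | (p.1 ∈ Φ ∧ p.1 = p.2) ∨ (p.1 ∉ Φ ∧ p.2 ∉ Φ ∧ (p.1, p.2) ∈ E)}

/-- The family of entourages of the coarse structure `E_φ` with base `{H_{(E,Φ)}}`. -/
def EPhiSets (C : CoarseStruct X) (φ : Filter X) : Set (Set (X × X)) :=
  {E' | Set.diagonal X ⊆ E' ∧ ∃ E ∈ C.sets, ∃ Φ ∈ φ, E' ⊆ EPhiBase E Φ}

/-- The set `B♯` of ultrafilters containing the complement of every bounded set. -/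
def Bsharp (C : CoarseStruct X) : Set (Ultrafilter X) :=
  {p | ∀ B : Set X, C.IsBounded B → Bᶜ ∈ p}

/-- Parallelity of ultrafilters: `p ∥ q`. -/
def Parallel (C : CoarseStruct X) (p q : Ultrafilter X) : Prop :=
  ∃ E ∈ C.sets, ∀ P ∈ p, ball E P ∈ q

def AsympDisjoint (C : CoarseStruct X) (A B : Set X) : Prop :=
  ∀ E ∈ C.sets, C.IsBounded (ball E A ∩ ball E B)

def AsympNbhd (C : CoarseStruct X) (A U : Set X) : Prop :=
  ∀ E ∈ C.sets, C.IsBounded (ball E A \ U)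

def Normal (C : CoarseStruct X) : Prop :=
  ∀ A B : Set X, C.AsympDisjoint A B →
    ∃ U V : Set X, C.AsympNbhd A U ∧ C.AsympNbhd B V ∧ Disjoint U V

end CoarseStruct

/-- `p ∼ q`: the ultrafilters are identified in the Higson corona, i.e. every slowly
oscillating function `h : X → [0,1]` has the same limit along `p` and along `q`. -/
def HigsonEquiv {X : Type*} (C : CoarseStruct X) (p q : Ultrafilter X) : Prop :=
  ∀ h : X → ℝ, (∀ x : X, h x ∈ Set.Icc (0 : ℝ) 1) → C.SlowlyOscillating h →
    ∀ L : ℝ, Filter.Tendsto h (p : Filter X) (nhds L) ↔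
      Filter.Tendsto h (q : Filter X) (nhds L)


/-!
The three conditions are linked by a cycle of implications. If `p ∼ q` but some `P ∈ p` and
`Q ∈ q` are not linked, then `P` and `Q` are asymptotically disjoint, and a coarse Urysohn lemma
(normality lets one interpolate asymptotic neighbourhoods along a dyadic scale) gives a slowly
oscillating function that is `0` on `P \ Q` and `1` on `Q`, separating `p` from `q`. If all such
`P`, `Q` are linked, unbounded close subsets `P' ⊆ P`, `Q' ⊆ Q` carry parallel ultrafilters
`u ∋ P'` in `B♯` and `v ∋ Q'` (the image of `u` under a choice of close points), so every basic
neighbourhood of `(p, q)` meets `∥`. Finally, `h^β(u) = h^β(v)` is a closed condition on `(u, v)`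
which holds on parallel pairs because `h` oscillates slowly.
-/

open Filter Topology SetRel

section DyadicScale

variable {X : Type*}

def DyadicMonotone (U : ℕ → ℕ → Set X) : Prop :=
  ∀ m j n k : ℕ, (j : ℝ) / 2 ^ m ≤ k / 2 ^ n → U m j ⊆ U n k

/-- For a dyadically monotone `U`, each `U n k` lies between `{f < k / 2 ^ n}` and
`{f ≤ k / 2 ^ n}`, where `f = urysohnFun U`. -/
noncomputable def urysohnFun (U : ℕ → ℕ → Set X) (x : X) : ℝ :=
  sInf (insert 1 {r | ∃ n k : ℕ, x ∈ U n k ∧ r = k / 2 ^ n})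

variable {U : ℕ → ℕ → Set X} {x : X}

lemma urysohnFun_nonneg : 0 ≤ urysohnFun U x :=
  le_csInf ⟨1, mem_insert _ _⟩ <| by rintro r (rfl | ⟨n, k, -, rfl⟩) <;> positivity

lemma bddBelow_insert_one_dyadic :
    BddBelow (insert 1 {r : ℝ | ∃ n k : ℕ, x ∈ U n k ∧ r = k / 2 ^ n}) :=
  ⟨0, by rintro r (rfl | ⟨n, k, -, rfl⟩) <;> positivity⟩

lemma urysohnFun_le_one : urysohnFun U x ≤ 1 :=
  csInf_le bddBelow_insert_one_dyadic (mem_insert _ _)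

lemma urysohnFun_mem_Icc : urysohnFun U x ∈ Icc 0 1 :=
  ⟨urysohnFun_nonneg, urysohnFun_le_one⟩

lemma urysohnFun_le {n k : ℕ} (hx : x ∈ U n k) : urysohnFun U x ≤ k / 2 ^ n :=
  csInf_le bddBelow_insert_one_dyadic (mem_insert_of_mem _ ⟨n, k, hx, rfl⟩)

lemma mem_of_urysohnFun_lt (hU : DyadicMonotone U) {n k : ℕ} (hk : (k : ℝ) / 2 ^ n ≤ 1)
    (h : urysohnFun U x < k / 2 ^ n) : x ∈ U n k := by
  obtain ⟨r, hr, hrk⟩ := exists_lt_of_csInf_lt ⟨1, mem_insert _ _⟩ h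
  rcases hr with rfl | ⟨m, j, hx, rfl⟩
  · exact absurd hk hrk.not_ge
  · exact hU m j n k hrk.le hx

lemma urysohnFun_le_add (hU : DyadicMonotone U) {y z : X} {n : ℕ}
    (hyz : ∀ k < 2 ^ n, y ∈ U n k → z ∈ U n (k + 1)) :
    urysohnFun U z ≤ urysohnFun U y + 2 / 2 ^ n := by
  set t := urysohnFun U y
  have h2n : (0 : ℝ) < 2 ^ n := by positivity
  obtain ⟨k, hk_gt, hk_le⟩ : ∃ k : ℕ, t < k / 2 ^ n ∧ (k : ℝ) / 2 ^ n ≤ t + 1 / 2 ^ n := by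
    have hfloor := Nat.floor_le (mul_nonneg (urysohnFun_nonneg (U := U) (x := y)) h2n.le)
    refine ⟨⌊t * 2 ^ n⌋₊ + 1, ?_, ?_⟩
    · rw [lt_div_iff₀ h2n]; push_cast; exact Nat.lt_floor_add_one _
    · rw [div_le_iff₀ h2n, add_mul, one_div_mul_cancel h2n.ne']; push_cast; linarith
  have h1 : (0 : ℝ) < 1 / 2 ^ n := by positivity
  have h2 : (2 : ℝ) / 2 ^ n = 1 / 2 ^ n + 1 / 2 ^ n := by ring
  rcases lt_or_ge k (2 ^ n) with hk | hk
  · have hy : y ∈ U n k :=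
      mem_of_urysohnFun_lt hU (div_le_one_of_le₀ (by exact_mod_cast hk.le) h2n.le) hk_gt
    calc urysohnFun U z ≤ ((k + 1 : ℕ) : ℝ) / 2 ^ n := urysohnFun_le (hyz k hk hy)
      _ = k / 2 ^ n + 1 / 2 ^ n := by push_cast; ring
      _ ≤ t + 2 / 2 ^ n := by linarith
  · have : (1 : ℝ) ≤ k / 2 ^ n := (one_le_div h2n).2 (by exact_mod_cast hk)
    linarith [urysohnFun_le_one (U := U) (x := z)]

def dyadicChain (mid : Set X → Set X → Set X) (A T : Set X) : ℕ → ℕ → Set X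
  | 0, k => if k = 0 then A else T
  | n + 1, k =>
    if k % 2 = 0 then dyadicChain mid A T n (k / 2)
    else mid (dyadicChain mid A T n (k / 2)) (dyadicChain mid A T n (k / 2 + 1))

variable {mid : Set X → Set X → Set X} {A T : Set X}

lemma dyadicChain_succ_two_mul (n j : ℕ) :
    dyadicChain mid A T (n + 1) (2 * j) = dyadicChain mid A T n j := by
  simp [dyadicChain]

lemma dyadicChain_succ_two_mul_add_one (n j : ℕ) :
    dyadicChain mid A T (n + 1) (2 * j + 1) =
      mid (dyadicChain mid A T n j) (dyadicChain mid A T n (j + 1)) := by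
  simp [dyadicChain, show (2 * j + 1) % 2 = 1 by omega, show (2 * j + 1) / 2 = j by omega]

lemma dyadicChain_lift (n k t : ℕ) :
    dyadicChain mid A T (n + t) (k * 2 ^ t) = dyadicChain mid A T n k := by
  induction t with
  | zero => simp
  | succ t ih => rw [← ih, ← add_assoc, pow_succ, ← mul_assoc, mul_comm _ 2,
      dyadicChain_succ_two_mul]

lemma dyadicChain_subset_succ (hmid : ∀ S T, S ⊆ T → S ⊆ mid S T ∧ mid S T ⊆ T)
    (hAT : A ⊆ T) (n k : ℕ) : dyadicChain mid A T n k ⊆ dyadicChain mid A T n (k + 1) := by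
  induction n generalizing k with
  | zero => by_cases hk : k = 0 <;> simp [dyadicChain, hk, hAT]
  | succ n ih =>
    rcases Nat.even_or_odd' k with ⟨j, rfl | rfl⟩
    · rw [dyadicChain_succ_two_mul, dyadicChain_succ_two_mul_add_one]
      exact (hmid _ _ (ih j)).1
    · rw [dyadicChain_succ_two_mul_add_one, show 2 * j + 1 + 1 = 2 * (j + 1) by ring,
        dyadicChain_succ_two_mul]
      exact (hmid _ _ (ih j)).2

lemma dyadicMonotone_dyadicChain (hmid : ∀ S T, S ⊆ T → S ⊆ mid S T ∧ mid S T ⊆ T)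
    (hAT : A ⊆ T) : DyadicMonotone (dyadicChain mid A T) := by
  intro m j n k h
  have hjk : j * 2 ^ n ≤ k * 2 ^ m := by
    rw [div_le_div_iff₀ (by positivity) (by positivity)] at h
    exact_mod_cast h
  rw [← dyadicChain_lift m j n, ← dyadicChain_lift n k m, add_comm n m]
  exact monotone_nat_of_le_succ (dyadicChain_subset_succ hmid hAT (m + n)) hjk

lemma dyadicChain_rel {R : Set X → Set X → Prop}
    (hmid : ∀ S T, S ⊆ T → S ⊆ mid S T ∧ mid S T ⊆ T)
    (hRmid : ∀ S T, S ⊆ T → R S T → R S (mid S T) ∧ R (mid S T) T)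
    (hAT : A ⊆ T) (hR : R A T) (n : ℕ) :
    ∀ k < 2 ^ n, R (dyadicChain mid A T n k) (dyadicChain mid A T n (k + 1)) := by
  induction n with
  | zero => intro k hk; simpa [dyadicChain, show k = 0 by omega] using hR
  | succ n ih =>
    intro k hk
    have hsub := dyadicChain_subset_succ hmid hAT n
    rcases Nat.even_or_odd' k with ⟨j, rfl | rfl⟩
    · rw [dyadicChain_succ_two_mul, dyadicChain_succ_two_mul_add_one]
      exact (hRmid _ _ (hsub j) (ih j (by omega))).1
    · rw [dyadicChain_succ_two_mul_add_one, show 2 * j + 1 + 1 = 2 * (j + 1) by ring,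
        dyadicChain_succ_two_mul]
      exact (hRmid _ _ (hsub j) (ih j (by omega))).2

theorem exists_dyadicMonotone_of_interpolate {R : Set X → Set X → Prop}
    (hinterp : ∀ S T, S ⊆ T → R S T → ∃ W, S ⊆ W ∧ W ⊆ T ∧ R S W ∧ R W T)
    (hAT : A ⊆ T) (hR : R A T) :
    ∃ U : ℕ → ℕ → Set X, DyadicMonotone U ∧ U 0 0 = A ∧ U 0 1 = T ∧
      ∀ n, ∀ k < 2 ^ n, R (U n k) (U n (k + 1)) := by
  have : ∀ S T : Set X, ∃ W, S ⊆ T → S ⊆ W ∧ W ⊆ T ∧ (R S T → R S W ∧ R W T) := by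
    intro S T
    by_cases hST : S ⊆ T ∧ R S T
    · obtain ⟨W, hSW, hWT, hSW', hWT'⟩ := hinterp S T hST.1 hST.2
      exact ⟨W, fun _ => ⟨hSW, hWT, fun _ => ⟨hSW', hWT'⟩⟩⟩
    · exact ⟨S, fun h => ⟨subset_rfl, h, fun h' => absurd ⟨h, h'⟩ hST⟩⟩
  choose mid hmid using this
  have hsub : ∀ S T, S ⊆ T → S ⊆ mid S T ∧ mid S T ⊆ T :=
    fun S T h => ⟨(hmid S T h).1, (hmid S T h).2.1⟩
  exact ⟨dyadicChain mid A T, dyadicMonotone_dyadicChain hsub hAT, rfl, rfl,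
    dyadicChain_rel hsub (fun S T h => (hmid S T h).2.2) hAT hR⟩

end DyadicScale

namespace CoarseStruct

variable {X : Type*} {C : CoarseStruct X} {E F : SetRel X X} {A A' B B' P T T' : Set X}

lemma comp_mem_sets (hE : E ∈ C.sets) (hF : F ∈ C.sets) : E ○ F ∈ C.sets :=
  C.comp_mem E hE F hF

lemma inv_mem_sets (hE : E ∈ C.sets) : E.inv ∈ C.sets :=
  C.inv_mem E hE

lemma mem_ball_singleton {x y : X} : y ∈ ball E {x} ↔ (x, y) ∈ E := by
  simp [ball]

lemma subset_ball (hE : E ∈ C.sets) (A : Set X) : A ⊆ ball E A :=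
  fun a ha => ⟨a, ha, C.diagonal_subset E hE rfl⟩

lemma ball_mono (h : A ⊆ B) : ball E A ⊆ ball E B :=
  image_subset_image h

lemma ball_union : ball E (A ∪ B) = ball E A ∪ ball E B :=
  image_union ..

lemma IsBounded.subset (hB : C.IsBounded B) (h : A ⊆ B) : C.IsBounded A := by
  obtain ⟨E, hE, x, hx⟩ := hB
  exact ⟨E, hE, x, h.trans hx⟩

lemma isBounded_empty [Nonempty X] : C.IsBounded ∅ :=
  ⟨_, C.diagonal_mem, Classical.arbitrary X, empty_subset _⟩

lemma IsBounded.union (hA : C.IsBounded A) (hB : C.IsBounded B) : C.IsBounded (A ∪ B) := by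
  obtain ⟨E₁, hE₁, x₁, h₁⟩ := hA
  obtain ⟨E₂, hE₂, x₂, h₂⟩ := hB
  obtain ⟨E₃, hE₃, hx⟩ := C.cover (x₁, x₂)
  have hE : E₁ ∪ (E₃ ○ E₂) ∈ C.sets :=
    C.subset_mem _ (comp_mem_sets (comp_mem_sets hE₁ hE₃) hE₂) _
      (fun _ h => Or.inl (C.diagonal_subset E₁ hE₁ h)) <| by
        rintro ⟨a, b⟩ (h | ⟨z, hz, hzb⟩)
        · exact ⟨b, ⟨b, h, C.diagonal_subset E₃ hE₃ rfl⟩, C.diagonal_subset E₂ hE₂ rfl⟩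
        · exact ⟨z, ⟨a, C.diagonal_subset E₁ hE₁ rfl, hz⟩, hzb⟩
  refine ⟨_, hE, x₁, union_subset (fun y hy => ?_) fun y hy => ?_⟩
  · exact mem_ball_singleton.2 (Or.inl (mem_ball_singleton.1 (h₁ hy)))
  · exact mem_ball_singleton.2 (Or.inr ⟨x₂, hx, mem_ball_singleton.1 (h₂ hy)⟩)

lemma IsBounded.ball (hA : C.IsBounded A) (hE : E ∈ C.sets) : C.IsBounded (ball E A) := by
  obtain ⟨E₀, hE₀, x, hx⟩ := hA
  exact ⟨E₀ ○ E, comp_mem_sets hE₀ hE, x, (ball_mono hx).trans (SetRel.image_comp ..).ge⟩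

/-- `B♯` consists of the ultrafilters finer than this filter. -/
def cobounded [Nonempty X] (C : CoarseStruct X) : Filter X :=
  comk C.IsBounded isBounded_empty (fun _ ht _ hs => ht.subset hs) fun _ hs _ ht => hs.union ht

lemma mem_cobounded [Nonempty X] {S : Set X} : S ∈ C.cobounded ↔ C.IsBounded Sᶜ :=
  mem_comk

lemma isBounded_biUnion_finset [Nonempty X] {ι : Type*} (s : Finset ι) {f : ι → Set X}
    (h : ∀ i ∈ s, C.IsBounded (f i)) : C.IsBounded (⋃ i ∈ s, f i) := by
  have : ⋂ i ∈ s, (f i)ᶜ ∈ C.cobounded :=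
    (biInter_finset_mem s).2 fun i hi => mem_cobounded.2 ((compl_compl (f i)).symm ▸ h i hi)
  simpa only [mem_cobounded, compl_iInter₂, compl_compl] using this

lemma not_isBounded_of_mem {p : Ultrafilter X} (hp : p ∈ C.Bsharp) (hP : P ∈ p) :
    ¬C.IsBounded P :=
  fun h => Ultrafilter.compl_mem_iff_notMem.1 (hp P h) hP

lemma exists_mem_bsharp [Nonempty X] (hP : ¬C.IsBounded P) : ∃ u ∈ C.Bsharp, P ∈ u := by
  have : (C.cobounded ⊓ 𝓟 P).NeBot := by
    refine inf_principal_neBot_iff.2 fun S hS => not_not.1 fun hSP => hP ?_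
    exact (mem_cobounded.1 hS).subset
      fun x hx hxS => hSP ⟨x, hxS, hx⟩
  refine ⟨Ultrafilter.of (C.cobounded ⊓ 𝓟 P), fun B hB => ?_, ?_⟩
  · exact Ultrafilter.of_le _ (mem_inf_of_left (mem_cobounded.2 ((compl_compl B).symm ▸ hB)))
  · exact Ultrafilter.of_le _ (mem_inf_of_right (mem_principal_self P))

lemma AsympDisjoint.symm (h : C.AsympDisjoint A B) : C.AsympDisjoint B A :=
  fun E hE => inter_comm (ball E A) _ ▸ h E hE

lemma AsympDisjoint.mono (h : C.AsympDisjoint A B) (hA : A' ⊆ A) (hB : B' ⊆ B) :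
    C.AsympDisjoint A' B' :=
  fun E hE => (h E hE).subset (inter_subset_inter (ball_mono hA) (ball_mono hB))

lemma AsympDisjoint.isBounded_inter (h : C.AsympDisjoint A B) : C.IsBounded (A ∩ B) :=
  (h _ C.diagonal_mem).subset
    (inter_subset_inter (subset_ball C.diagonal_mem A) (subset_ball C.diagonal_mem B))

lemma asympNbhd_iff_asympDisjoint_compl : C.AsympNbhd A T ↔ C.AsympDisjoint A Tᶜ := by
  refine ⟨fun h E hE => ?_, fun h E hE => (h E hE).subset fun x hx => ⟨hx.1, subset_ball hE _ hx.2⟩⟩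
  refine ((h _ (comp_mem_sets hE (inv_mem_sets hE))).ball hE).subset ?_
  rintro x ⟨⟨a, ha, hax⟩, t, ht, htx⟩
  exact ⟨t, ⟨⟨a, ha, x, hax, htx⟩, ht⟩, htx⟩

lemma AsympNbhd.mono_left (h : C.AsympNbhd A T) (hA : A' ⊆ A) : C.AsympNbhd A' T :=
  fun E hE => (h E hE).subset (sdiff_subset_sdiff_left (ball_mono hA))

lemma AsympNbhd.mono_right (h : C.AsympNbhd A T) (hT : T ⊆ T') : C.AsympNbhd A T' :=
  fun E hE => (h E hE).subset (sdiff_subset_sdiff_right hT)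

lemma AsympNbhd.inter_right (h : C.AsympNbhd A T) (h' : C.AsympNbhd A T') :
    C.AsympNbhd A (T ∩ T') :=
  fun E hE => sdiff_inter .. ▸ (h E hE).union (h' E hE)

lemma AsympNbhd.union_left (h : C.AsympNbhd A T) (h' : C.AsympNbhd B T) :
    C.AsympNbhd (A ∪ B) T :=
  fun E hE => by rw [ball_union, union_sdiff_distrib]; exact (h E hE).union (h' E hE)

lemma Normal.exists_asympNbhd_between (hN : C.Normal) (hAT : A ⊆ T) (h : C.AsympNbhd A T) :
    ∃ W, A ⊆ W ∧ W ⊆ T ∧ C.AsympNbhd A W ∧ C.AsympNbhd W T := by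
  obtain ⟨U, V, hAU, hTV, hUV⟩ := hN A Tᶜ (asympNbhd_iff_asympDisjoint_compl.1 h)
  have hUT : C.AsympNbhd U T := asympNbhd_iff_asympDisjoint_compl.2 <|
    (asympNbhd_iff_asympDisjoint_compl.1 hTV).symm.mono hUV.subset_compl_right subset_rfl
  exact ⟨U ∩ T ∪ A, subset_union_right, union_subset inter_subset_right hAT,
    (hAU.inter_right h).mono_right subset_union_left, (hUT.mono_left inter_subset_left).union_left h⟩

lemma slowlyOscillating_urysohnFun [Nonempty X] {U : ℕ → ℕ → Set X} (hU : DyadicMonotone U)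
    (hnbhd : ∀ n, ∀ k < 2 ^ n, C.AsympNbhd (U n k) (U n (k + 1))) :
    C.SlowlyOscillating (urysohnFun U) := by
  intro E hE ε hε
  obtain ⟨n, hn⟩ : ∃ n : ℕ, 2 / 2 ^ n < ε := by
    obtain ⟨n, hn⟩ := exists_pow_lt_of_lt_one (half_pos hε) one_half_lt_one
    exact ⟨n, by rw [one_div_pow] at hn; linarith [show (2 : ℝ) / 2 ^ n = 2 * (1 / 2 ^ n) by ring]⟩
  set G := SetRel.inv E ○ E
  have hG : G ∈ C.sets := comp_mem_sets (inv_mem_sets hE) hE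
  -- off `D`, the `G`-neighbours of `U n k` lie in `U n (k + 1)` for every `k`
  set D := ⋃ k ∈ Finset.range (2 ^ n), ball G (U n k) \ U n (k + 1)
  have hD : C.IsBounded D :=
    isBounded_biUnion_finset _ fun k hk => hnbhd n k (Finset.mem_range.1 hk) G hG
  have hstep : ∀ y z, (y, z) ∈ G → z ∉ D → urysohnFun U z ≤ urysohnFun U y + 2 / 2 ^ n :=
    fun y z hyz hz => urysohnFun_le_add hU fun k hk hy => not_not.1 fun hz' =>
      hz (mem_biUnion (Finset.mem_range.2 hk) ⟨⟨y, hy, hyz⟩, hz'⟩)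
  refine ⟨ball (SetRel.inv E) D, hD.ball (inv_mem_sets hE), fun x hx y hy z hz => ?_⟩
  rw [mem_ball_singleton] at hy hz
  have hD' : ∀ w, (x, w) ∈ E → w ∉ D := fun w hw hwD => hx ⟨w, hwD, hw⟩
  have hzy := hstep y z ⟨x, hy, hz⟩ (hD' z hz)
  have hyz := hstep z y ⟨x, hz, hy⟩ (hD' y hy)
  exact (abs_sub_le_iff.2 ⟨by linarith, by linarith⟩).trans_lt hn

theorem Normal.exists_slowlyOscillating [Nonempty X] (hN : C.Normal) (hd : Disjoint A B)
    (hAB : C.AsympDisjoint A B) :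
    ∃ f : X → ℝ, C.SlowlyOscillating f ∧ EqOn f 0 A ∧ EqOn f 1 B ∧ ∀ x, f x ∈ Icc 0 1 := by
  obtain ⟨U, hU, hU0, hU1, hnbhd⟩ := exists_dyadicMonotone_of_interpolate
    (fun _ _ => hN.exists_asympNbhd_between) hd.subset_compl_right
    (asympNbhd_iff_asympDisjoint_compl.2 (by rwa [compl_compl]))
  refine ⟨urysohnFun U, slowlyOscillating_urysohnFun hU hnbhd, fun x hx => ?_, fun x hx => ?_,
    fun x => urysohnFun_mem_Icc⟩
  · refine le_antisymm ?_ urysohnFun_nonneg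
    simpa using urysohnFun_le (n := 0) (k := 0) (hU0.symm ▸ hx)
  · refine le_antisymm urysohnFun_le_one (not_lt.1 fun h => ?_)
    have := mem_of_urysohnFun_lt hU (n := 0) (k := 1) (by simp) (by simpa using h)
    exact (hU1 ▸ this) hx

end CoarseStruct

theorem Ultrafilter.mk_mem_closure_iff {α β : Type*} {S : Set (Ultrafilter α × Ultrafilter β)}
    {p : Ultrafilter α} {q : Ultrafilter β} :
    (p, q) ∈ closure S ↔ ∀ P ∈ p, ∀ Q ∈ q, ∃ r ∈ S, P ∈ r.1 ∧ Q ∈ r.2 := by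
  rw [(ultrafilterBasis_is_basis.prod ultrafilterBasis_is_basis).mem_closure_iff]
  constructor
  · intro h P hP Q hQ
    obtain ⟨r, ⟨hr₁, hr₂⟩, hr⟩ := h _ ⟨_, ⟨P, rfl⟩, _, ⟨Q, rfl⟩, rfl⟩ ⟨hP, hQ⟩
    exact ⟨r, hr, hr₁, hr₂⟩
  · rintro h _ ⟨_, ⟨P, rfl⟩, _, ⟨Q, rfl⟩, rfl⟩ ⟨hP, hQ⟩
    obtain ⟨r, hr, hr₁, hr₂⟩ := h P hP Q hQ
    exact ⟨r, ⟨hr₁, hr₂⟩, hr⟩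

/-- `Ultrafilter.extend (codRestrict h _ hI)` is the paper's `h^β`. -/
lemma tendsto_iff_extend_codRestrict_eq {X : Type*} {h : X → ℝ} (hI : ∀ x, h x ∈ Icc (0 : ℝ) 1)
    (u : Ultrafilter X) (L : ℝ) :
    Tendsto h u (𝓝 L) ↔ (↑(Ultrafilter.extend (codRestrict h _ hI) u) : ℝ) = L := by
  have hlim : Tendsto h u (𝓝 ↑(Ultrafilter.extend (codRestrict h _ hI) u)) :=
    continuous_subtype_val.continuousAt.tendsto.comp (ultrafilter_extend_eq_iff.1 rfl)
  exact ⟨fun hL => tendsto_nhds_unique hlim hL, fun hL => hL ▸ hlim⟩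

namespace CoarseStruct

variable {X : Type*} {C : CoarseStruct X} {E : SetRel X X} {P Q Z : Set X}

lemma subset_ball_inter_ball_inv (hZ : Z ⊆ ball E P) : Z ⊆ ball E (P ∩ ball E.inv Z) := by
  intro z hz
  obtain ⟨a, ha, haz⟩ := hZ hz
  exact ⟨a, ⟨ha, z, hz, haz⟩, haz⟩

lemma inter_ball_inv_subset_ball (hZ : Z ⊆ ball E Q) :
    P ∩ ball E.inv Z ⊆ ball (E ○ E.inv) (Q ∩ ball E.inv Z) := by
  rintro x ⟨-, z, hz, hzx⟩
  obtain ⟨b, hb, hbz⟩ := hZ hz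
  exact ⟨b, ⟨hb, z, hz, hbz⟩, z, hbz, hzx⟩

/-- Where `ball E P ∩ ball E Q` is unbounded, the points of `P` and `Q` feeding it form unbounded
close subsets. -/
lemma asympDisjoint_of_not_linked (h : ¬C.Linked P Q) : C.AsympDisjoint P Q := by
  intro E hE
  by_contra hZ
  set Z := ball E P ∩ ball E Q
  have hZP : Z ⊆ ball E (P ∩ ball (SetRel.inv E) Z) := subset_ball_inter_ball_inv inter_subset_left
  have hZQ : Z ⊆ ball E (Q ∩ ball (SetRel.inv E) Z) := subset_ball_inter_ball_inv inter_subset_right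
  refine h (Or.inr ⟨_, _, inter_subset_left, inter_subset_left,
    fun hb => hZ ((hb.ball hE).subset hZP), fun hb => hZ ((hb.ball hE).subset hZQ),
    _, comp_mem_sets hE (inv_mem_sets hE), inter_ball_inv_subset_ball inter_subset_right,
    inter_ball_inv_subset_ball inter_subset_left⟩)

lemma Parallel.mem_bsharp {u v : Ultrafilter X} (huv : C.Parallel u v) (hu : u ∈ C.Bsharp) :
    v ∈ C.Bsharp := by
  obtain ⟨E, hE, hball⟩ := huv
  intro B hB
  refine mem_of_superset (hball _ (hu _ (hB.ball (inv_mem_sets hE)))) ?_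
  rintro y ⟨a, ha, hay⟩ hyB
  exact ha ⟨y, hyB, hay⟩

lemma exists_parallel_of_subset_ball [Nonempty X] {F : SetRel X X} (hF : F ∈ C.sets)
    (hP : ¬C.IsBounded P) (hPQ : P ⊆ ball F Q) :
    ∃ u ∈ C.Bsharp, ∃ v ∈ C.Bsharp, C.Parallel u v ∧ P ∈ u ∧ Q ∈ v := by
  obtain ⟨u, hu, hPu⟩ := exists_mem_bsharp hP
  have : ∀ x ∈ P, ∃ a ∈ Q, (a, x) ∈ F := hPQ
  choose! g hgQ hgF using this
  have huv : C.Parallel u (u.map g) := ⟨F.inv, inv_mem_sets hF, fun R hR =>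
    Ultrafilter.mem_map.2 <| mem_of_superset (inter_mem hR hPu) fun x hx =>
      show g x ∈ ball F.inv R from ⟨x, hx.1, hgF x hx.2⟩⟩
  exact ⟨u, hu, _, huv.mem_bsharp hu, huv, hPu,
    Ultrafilter.mem_map.2 (mem_of_superset hPu hgQ)⟩

lemma Parallel.tendsto {u v : Ultrafilter X} (huv : C.Parallel u v) (hu : u ∈ C.Bsharp)
    {h : X → ℝ} (hso : C.SlowlyOscillating h) {L : ℝ} (hL : Tendsto h u (𝓝 L)) :
    Tendsto h v (𝓝 L) := by
  obtain ⟨E, hE, hball⟩ := huv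
  rw [Metric.tendsto_nhds] at hL ⊢
  intro ε hε
  obtain ⟨B, hB, hosc⟩ := hso E hE (ε / 2) (half_pos hε)
  refine mem_of_superset (hball _ (inter_mem (hL _ (half_pos hε)) (hu B hB))) ?_
  rintro y ⟨x, ⟨hxL, hxB⟩, hxy⟩
  have hxy' : dist (h y) (h x) < ε / 2 :=
    hosc x hxB y (mem_ball_singleton.2 hxy) x (subset_ball hE _ rfl)
  calc dist (h y) L ≤ dist (h y) (h x) + dist (h x) L := dist_triangle _ _ _
    _ < ε / 2 + ε / 2 := add_lt_add hxy' hxL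
    _ = ε := add_halves ε

lemma Parallel.extend_eq {u v : Ultrafilter X} (huv : C.Parallel u v) (hu : u ∈ C.Bsharp)
    {h : X → ℝ} (hso : C.SlowlyOscillating h) (hI : ∀ x, h x ∈ Icc (0 : ℝ) 1) :
    Ultrafilter.extend (codRestrict h _ hI) u = Ultrafilter.extend (codRestrict h _ hI) v :=
  Subtype.ext <| ((tendsto_iff_extend_codRestrict_eq hI v _).1
    (huv.tendsto hu hso ((tendsto_iff_extend_codRestrict_eq hI u _).2 rfl))).symm

variable {p q : Ultrafilter X}

lemma linked_of_higsonEquiv (hN : C.Normal) (hp : p ∈ C.Bsharp) (hpq : HigsonEquiv C p q) :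
    ∀ P ∈ p, ∀ Q ∈ q, C.Linked P Q := by
  intro P hP Q hQ
  by_contra hPQ
  have : Nonempty X := nonempty_of_neBot (p : Filter X)
  have hdisj := asympDisjoint_of_not_linked hPQ
  have hP₀ : P \ Q ∈ p := mem_of_superset (inter_mem hP (hp _ hdisj.isBounded_inter))
    fun x hx => ⟨hx.1, fun hxQ => hx.2 ⟨hx.1, hxQ⟩⟩
  obtain ⟨f, hso, hf₀, hf₁, hI⟩ :=
    hN.exists_slowlyOscillating disjoint_sdiff_left (hdisj.mono sdiff_subset subset_rfl)
  have h₀ : Tendsto f p (𝓝 0) := tendsto_const_nhds.congr' (eventuallyEq_of_mem hP₀ hf₀).symm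
  have h₁ : Tendsto f q (𝓝 1) := tendsto_const_nhds.congr' (eventuallyEq_of_mem hQ hf₁).symm
  exact zero_ne_one (tendsto_nhds_unique ((hpq f hI hso 0).1 h₀) h₁)

lemma mem_closure_parallel_of_linked (hp : p ∈ C.Bsharp) (hpq : ∀ P ∈ p, ∀ Q ∈ q, C.Linked P Q) :
    (p, q) ∈ closure {r : Ultrafilter X × Ultrafilter X |
      r.1 ∈ C.Bsharp ∧ r.2 ∈ C.Bsharp ∧ C.Parallel r.1 r.2} := by
  have : Nonempty X := nonempty_of_neBot (p : Filter X)
  refine Ultrafilter.mk_mem_closure_iff.2 fun P hP Q hQ => ?_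
  rcases hpq P hP Q hQ with ⟨hPb, -⟩ | ⟨P', Q', hP'P, hQ'Q, hP', -, F, hF, hP'F, -⟩
  · exact absurd hPb (not_isBounded_of_mem hp hP)
  · obtain ⟨u, hu, v, hv, huv, hP'u, hQ'v⟩ := exists_parallel_of_subset_ball hF hP' hP'F
    exact ⟨(u, v), ⟨hu, hv, huv⟩, mem_of_superset hP'u hP'P, mem_of_superset hQ'v hQ'Q⟩

/-- `h^β(u) = h^β(v)` is a closed condition on `(u, v)` that holds on parallel pairs. -/
lemma higsonEquiv_of_mem_closure_parallel
    (hpq : (p, q) ∈ closure {r : Ultrafilter X × Ultrafilter X |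
      r.1 ∈ C.Bsharp ∧ r.2 ∈ C.Bsharp ∧ C.Parallel r.1 r.2}) :
    HigsonEquiv C p q := by
  intro h hI hso L
  set hβ := Ultrafilter.extend (codRestrict h _ hI)
  have hclosed : IsClosed {r : Ultrafilter X × Ultrafilter X | hβ r.1 = hβ r.2} :=
    isClosed_eq ((continuous_ultrafilter_extend _).comp continuous_fst)
      ((continuous_ultrafilter_extend _).comp continuous_snd)
  have hpq' : hβ p = hβ q :=
    hclosed.closure_subset_iff.2 (fun r hr => hr.2.2.extend_eq hr.1 hso hI) hpq
  rw [tendsto_iff_extend_codRestrict_eq hI, tendsto_iff_extend_codRestrict_eq hI]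
  simp only [hβ] at hpq'
  rw [hpq']

end CoarseStruct

open CoarseStruct

theorem normal_corona_characterization_general {X : Type*} (C : CoarseStruct X)
    (hN : C.Normal) (p q : Ultrafilter X) (hp : p ∈ C.Bsharp) :
    (HigsonEquiv C p q ↔ ∀ P ∈ p, ∀ Q ∈ q, C.Linked P Q) ∧
    ((∀ P ∈ p, ∀ Q ∈ q, C.Linked P Q) ↔
      (p, q) ∈ closure {r : Ultrafilter X × Ultrafilter X |
        r.1 ∈ C.Bsharp ∧ r.2 ∈ C.Bsharp ∧ C.Parallel r.1 r.2}) :=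
  ⟨⟨linked_of_higsonEquiv hN hp, fun h =>
      higsonEquiv_of_mem_closure_parallel (mem_closure_parallel_of_linked hp h)⟩,
    ⟨mem_closure_parallel_of_linked hp, fun h =>
      linked_of_higsonEquiv hN hp (higsonEquiv_of_mem_closure_parallel h)⟩⟩

/-- For a normal coarse space and `p, q ∈ B♯`:
`p ∼ q` ↔ (`P λ Q` for all `P ∈ p`, `Q ∈ q`) ↔ `(p,q)` lies in the closure of `∥`. -/
theorem normal_corona_characterization {X : Type*} (C : CoarseStruct X)
    (hN : C.Normal) (p q : Ultrafilter X) (hp : p ∈ C.Bsharp) (hq : q ∈ C.Bsharp) :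
    (HigsonEquiv C p q ↔ ∀ P ∈ p, ∀ Q ∈ q, C.Linked P Q) ∧
    ((∀ P ∈ p, ∀ Q ∈ q, C.Linked P Q) ↔
      (p, q) ∈ closure {r : Ultrafilter X × Ultrafilter X |
        r.1 ∈ C.Bsharp ∧ r.2 ∈ C.Bsharp ∧ C.Parallel r.1 r.2}) :=
  normal_corona_characterization_general C hN p q hp
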